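/- Let k be a field of characteristic p > 0, let n ≥ 0, r ≥ 0, and let f_0, …, f_r be polynomials in k[x_0, x_1, …, x_n] such that no f_i contains a nonconstant p-th power monomial with nonzero coefficient, and such that not all of the f_i are constant. Then there exist integers d_1 > d_2 > … > d_n > 0 with the following property: setting f'_i = f_i(x_0, x_1 + x_0^{d_1}, …, x_n + x_0^{d_n}) (substitute x_j ↦ x_j + x_0^{d_j} for 1 ≤ j ≤ n and x_0 ↦ x_0), there exists an index i_0 ∈ {0, …, r} such that deg(f'_i)·p^{r−i} < deg(f'_{i_0})·p^{r−i_0} for all i ≠ i_0, and p does not divide deg(f'_{i_0}). (Here deg denotes total degree.) -/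

import Mathlib

/-!
Give `x_0` weight `1` and `x_j` weight `d_j`. If the weighted degree has a unique maximum on the
support of `f`, at `e`, then `deg f' = weight e`: the substitution raises no degree beyond the
weights, and specializing `x_j ↦ 0` for `j ≥ 1` sends `x^e` to `x_0 ^ weight e`, so the top term
survives.

Take `d_j = M * B^(n-j) + ρ_j`, where `B` bounds every coordinate of the scaled exponent vectors
`p^(r-i) • e` (`e` in the support of `f_i`) and `M ≥ B * (1 + ∑ ρ)`. On such vectors the weight is
strictly monotone for the lexicographic order in the variables `x_1, …, x_n, x_0`, whatever `ρ` is.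
The lexicographic maximum of all `p^(r-i) • e` comes from a single pair `(i₀, e₀)`, since an
equality `p^a • e = p^b • e'` with `a ≠ b` would make a nonzero exponent vector divisible by `p`.
Finally `p ∣ M`, so `weight e₀ ≡ e₀ 0 + ∑ ρ_j e₀ j (mod p)`, and `ρ` (zero or a single `1`) can be
chosen to make this prime to `p`.
-/

open MvPolynomial

/-- The substitution `x_0 ↦ x_0`, `x_j ↦ x_j + x_0 ^ (d j)` for `1 ≤ j ≤ n`, as an algebra
endomorphism of `k[x_0, …, x_n]`. -/
noncomputable def substShift (k : Type*) [CommSemiring k] (n : ℕ) (d : Fin n → ℕ) :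
    MvPolynomial (Fin (n + 1)) k →ₐ[k] MvPolynomial (Fin (n + 1)) k :=
  aeval (Fin.cases (X 0) (fun j : Fin n => X j.succ + X 0 ^ d j))

open Finsupp

def shiftWeight {n : ℕ} (d : Fin n → ℕ) : Fin (n + 1) → ℕ := Fin.cons 1 d

@[simp] theorem shiftWeight_zero {n : ℕ} (d : Fin n → ℕ) : shiftWeight d 0 = 1 := rfl

@[simp] theorem shiftWeight_succ {n : ℕ} (d : Fin n → ℕ) (j : Fin n) :
    shiftWeight d j.succ = d j := rfl

section Degree

variable {R σ τ : Type*} [CommSemiring R]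

theorem totalDegree_X_le (s : σ) : (X s : MvPolynomial σ R).totalDegree ≤ 1 :=
  (totalDegree_monomial_le (single s 1) (1 : R)).trans_eq (by simp)

theorem totalDegree_X_pow_le (s : σ) (m : ℕ) : (X s ^ m : MvPolynomial σ R).totalDegree ≤ m :=
  (totalDegree_pow _ _).trans (mul_le_of_le_one_right' (totalDegree_X_le s))

theorem totalDegree_aeval_le_weightedTotalDegree (g : σ → MvPolynomial τ R) (c : σ → ℕ)
    (hg : ∀ i, (g i).totalDegree ≤ c i) (q : MvPolynomial σ R) :
    (aeval g q).totalDegree ≤ q.weightedTotalDegree c := by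
  conv_lhs => rw [← q.support_sum_monomial_coeff, map_sum]
  refine (totalDegree_finsetSum _ _).trans (Finset.sup_mono_fun fun e _ => ?_)
  rw [aeval_monomial, weight_apply, Finsupp.prod, Finsupp.sum]
  refine (totalDegree_mul _ _).trans ?_
  rw [algebraMap_eq, totalDegree_C, zero_add]
  refine (totalDegree_finsetProd _ _).trans (Finset.sum_le_sum fun i _ => ?_)
  exact (totalDegree_pow _ _).trans (Nat.mul_le_mul_left _ (hg i))

theorem aeval_X_pow_monomial (i : τ) (c : σ → ℕ) (e : σ →₀ ℕ) (a : R) :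
    aeval (fun m => X i ^ c m) (monomial e a) = monomial (single i (weight c e)) a := by
  simp_rw [aeval_monomial, ← C_mul_X_pow_eq_monomial, weight_apply, Finsupp.prod, Finsupp.sum,
    algebraMap_eq, ← pow_mul, Finset.prod_pow_eq_pow_sum, smul_eq_mul, mul_comm]

theorem coeff_aeval_X_pow_of_weight_ne (i : τ) (c : σ → ℕ) (q : MvPolynomial σ R)
    (e₀ : σ →₀ ℕ) (hinj : ∀ e ∈ q.support, e ≠ e₀ → weight c e ≠ weight c e₀) :
    coeff (single i (weight c e₀)) (aeval (fun m => X i ^ c m) q) = coeff e₀ q := by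
  classical
  conv_lhs => rw [← q.support_sum_monomial_coeff, map_sum]
  rw [coeff_sum, Finset.sum_eq_single e₀]
  · rw [aeval_X_pow_monomial, coeff_monomial, if_pos rfl]
  · intro e he hne
    rw [aeval_X_pow_monomial, coeff_monomial,
      if_neg ((single_injective i).ne (hinj e he hne))]
  · intro h
    rw [MvPolynomial.notMem_support_iff.mp h, map_zero, map_zero, coeff_zero]

theorem weight_le_totalDegree_aeval_X_pow (i : τ) (c : σ → ℕ) {q : MvPolynomial σ R}
    {e₀ : σ →₀ ℕ} (he₀ : e₀ ∈ q.support)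
    (hinj : ∀ e ∈ q.support, e ≠ e₀ → weight c e ≠ weight c e₀) :
    weight c e₀ ≤ (aeval (fun m => (X i : MvPolynomial τ R) ^ c m) q).totalDegree := by
  refine le_of_eq_of_le (by simp) (le_totalDegree (s := single i (weight c e₀)) ?_)
  rw [MvPolynomial.mem_support_iff, coeff_aeval_X_pow_of_weight_ne i c q e₀ hinj]
  exact MvPolynomial.mem_support_iff.mp he₀

end Degree

section Shift

variable {k : Type*} [CommSemiring k] {n : ℕ}

theorem totalDegree_substShift_le (d : Fin n → ℕ) (hd : ∀ j, 0 < d j)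
    (q : MvPolynomial (Fin (n + 1)) k) :
    (substShift k n d q).totalDegree ≤ q.weightedTotalDegree (shiftWeight d) := by
  refine totalDegree_aeval_le_weightedTotalDegree _ _ (fun m => ?_) q
  induction m using Fin.cases with
  | zero => exact totalDegree_X_le 0
  | succ j =>
    simp only [Fin.cases_succ, shiftWeight_succ]
    exact (totalDegree_add _ _).trans
      (max_le ((totalDegree_X_le _).trans (hd j)) (totalDegree_X_pow_le 0 (d j)))

theorem aeval_specialize_substShift (d : Fin n → ℕ) (q : MvPolynomial (Fin (n + 1)) k) :
    aeval (Fin.cases (X 0) 0 : Fin (n + 1) → MvPolynomial (Fin (n + 1)) k)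
        (substShift k n d q) =
      aeval (fun m => (X 0 : MvPolynomial (Fin (n + 1)) k) ^ shiftWeight d m) q := by
  rw [substShift, comp_aeval_apply]
  refine congrArg (fun g => aeval g q) (funext fun m => ?_)
  induction m using Fin.cases <;> simp

theorem totalDegree_substShift_eq (d : Fin n → ℕ) (hd : ∀ j, 0 < d j)
    {q : MvPolynomial (Fin (n + 1)) k} {e₀ : Fin (n + 1) →₀ ℕ} (he₀ : e₀ ∈ q.support)
    (hmax : ∀ e ∈ q.support, e ≠ e₀ → weight (shiftWeight d) e < weight (shiftWeight d) e₀) :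
    (substShift k n d q).totalDegree = weight (shiftWeight d) e₀ := by
  refine le_antisymm ((totalDegree_substShift_le d hd q).trans (Finset.sup_le fun e he => ?_)) ?_
  · rcases eq_or_ne e e₀ with rfl | hne
    exacts [le_rfl, (hmax e he hne).le]
  -- Specializing `x_j ↦ 0` for `j ≥ 1` keeps the top-weight monomial of `q`.
  · calc weight (shiftWeight d) e₀
        ≤ (aeval (fun m => (X 0 : MvPolynomial (Fin (n + 1)) k) ^ shiftWeight d m) q).totalDegree :=
          weight_le_totalDegree_aeval_X_pow (0 : Fin (n + 1)) (shiftWeight d) he₀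
            fun e he hne => (hmax e he hne).ne
      _ = (aeval (Fin.cases (X 0) 0 : Fin (n + 1) → MvPolynomial (Fin (n + 1)) k)
            (substShift k n d q)).totalDegree := by
          rw [aeval_specialize_substShift]
      _ ≤ (substShift k n d q).totalDegree := by
          refine (totalDegree_aeval_le_weightedTotalDegree _ 1 (fun m => ?_) _).trans_eq
            (weightedTotalDegree_one _)
          induction m using Fin.cases
          exacts [totalDegree_X_le 0, by simp]

end Shift

section Numeral

variable {n : ℕ}

-- The base-`B` numeral with digits `e 1, …, e n`, most significant first.
def tailValue (B : ℕ) (e : Fin (n + 1) →₀ ℕ) : ℕ := ∑ j : Fin n, e j.succ * B ^ (j.rev : ℕ)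

theorem tail_eq_of_tailValue_eq {B : ℕ} {a b : Fin (n + 1) →₀ ℕ} (ha : ∀ m, a m < B)
    (hb : ∀ m, b m < B) (h : tailValue B a = tailValue B b) (j : Fin n) : a j.succ = b j.succ := by
  have hdigits : ∀ e : Fin (n + 1) →₀ ℕ, ∀ he : ∀ m, e m < B,
      (finFunctionFinEquiv (fun i : Fin n => (⟨e i.rev.succ, he _⟩ : Fin B)) : ℕ) =
        tailValue B e :=
    fun e he => Fintype.sum_equiv Fin.revPerm _ _ fun i => by simp
  have := finFunctionFinEquiv.injective
    (Fin.ext ((hdigits a ha).trans (h.trans (hdigits b hb).symm)))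
  simpa using congrArg Fin.val (congrFun this j.rev)

def lexKey (B : ℕ) (e : Fin (n + 1) →₀ ℕ) : ℕ ×ₗ ℕ := toLex (tailValue B e, e 0)

theorem lexKey_zero_le (B : ℕ) (e : Fin (n + 1) →₀ ℕ) :
    lexKey B (0 : Fin (n + 1) →₀ ℕ) ≤ lexKey B e :=
  Prod.Lex.toLex_mono (by simp [tailValue])

theorem eq_of_lexKey_eq {B : ℕ} {a b : Fin (n + 1) →₀ ℕ} (ha : ∀ m, a m < B)
    (hb : ∀ m, b m < B) (h : lexKey B a = lexKey B b) : a = b := by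
  simp only [lexKey, toLex_inj, Prod.mk.injEq] at h
  ext m
  induction m using Fin.cases
  exacts [h.2, tail_eq_of_tailValue_eq ha hb h.1 _]

def shiftExponents (M B : ℕ) (ρ : Fin n → ℕ) : Fin n → ℕ :=
  fun j => M * B ^ (j.rev : ℕ) + ρ j

variable {M B : ℕ} {ρ : Fin n → ℕ}

theorem shiftExponents_pos (hM : 0 < M) (hB : 0 < B) (j : Fin n) :
    0 < shiftExponents M B ρ j :=
  Nat.add_pos_left (Nat.mul_pos hM (pow_pos hB _)) _

theorem shiftExponents_strictAnti (hB : 2 ≤ B) (hρ : ∀ j, ρ j < M) :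
    StrictAnti (shiftExponents M B ρ) := by
  intro i j hij
  have hrev : (j.rev : ℕ) + 1 ≤ i.rev := Fin.rev_lt_rev.mpr hij
  have hpow : 1 ≤ B ^ (j.rev : ℕ) := Nat.one_le_pow _ _ (by omega)
  calc M * B ^ (j.rev : ℕ) + ρ j < M * B ^ (j.rev : ℕ) * 2 := by nlinarith [hρ j]
    _ ≤ M * B ^ ((j.rev : ℕ) + 1) := by
      rw [pow_succ, ← mul_assoc]
      exact Nat.mul_le_mul_left _ hB
    _ ≤ M * B ^ (i.rev : ℕ) := Nat.mul_le_mul_left _ (Nat.pow_le_pow_right (by omega) hrev)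
    _ ≤ shiftExponents M B ρ i := Nat.le_add_right _ _

theorem weight_shiftExponents (e : Fin (n + 1) →₀ ℕ) :
    weight (shiftWeight (shiftExponents M B ρ)) e =
      e 0 + ∑ j, ρ j * e j.succ + M * tailValue B e := by
  rw [weight_eq_sum, Fin.sum_univ_succ, tailValue, Finset.mul_sum, add_assoc,
    ← Finset.sum_add_distrib]
  simp only [shiftWeight_zero, shiftWeight_succ, smul_eq_mul, mul_one, shiftExponents]
  exact congrArg _ (Finset.sum_congr rfl fun j _ => by ring)

theorem weight_lt_weight_of_lexKey_lt (hM : B * (1 + ∑ j, ρ j) ≤ M) {a b : Fin (n + 1) →₀ ℕ}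
    (ha : ∀ m, a m < B) (hb : ∀ m, b m < B) (h : lexKey B a < lexKey B b) :
    weight (shiftWeight (shiftExponents M B ρ)) a <
      weight (shiftWeight (shiftExponents M B ρ)) b := by
  rw [weight_shiftExponents, weight_shiftExponents]
  rcases Prod.Lex.toLex_lt_toLex.mp h with hT | ⟨hT, h0⟩ <;> dsimp only at hT
  · have hlow : a 0 + ∑ j, ρ j * a j.succ < M :=
      calc a 0 + ∑ j, ρ j * a j.succ < B + ∑ j, ρ j * B :=
            add_lt_add_of_lt_of_le (ha 0)
              (Finset.sum_le_sum fun j _ => Nat.mul_le_mul_left _ (ha _).le)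
        _ = B * (1 + ∑ j, ρ j) := by rw [← Finset.sum_mul]; ring
        _ ≤ M := hM
    have hMT : M * tailValue B a + M ≤ M * tailValue B b := Nat.mul_le_mul_left M hT
    omega
  · have hR : ∑ j, ρ j * a j.succ = ∑ j, ρ j * b j.succ :=
      Finset.sum_congr rfl fun j _ => by rw [tail_eq_of_tailValue_eq ha hb hT j]
    rw [hR, hT]
    omega

end Numeral

section Selection

theorem eq_of_pow_smul_eq {σ : Type*} {p a b : ℕ} (hp : 1 < p) {x y : σ →₀ ℕ}
    (hx : x ≠ 0 → ¬ ∀ m, p ∣ x m) (hy : y ≠ 0 → ¬ ∀ m, p ∣ y m) (hy0 : y ≠ 0)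
    (h : p ^ a • x = p ^ b • y) : a = b ∧ x = y := by
  wlog hab : a ≤ b generalizing a b x y
  · have hx0 : x ≠ 0 := by
      rintro rfl
      exact hy0 (smul_eq_zero.mp h.symm |>.resolve_left (pow_ne_zero _ (by omega)))
    obtain ⟨hba, hyx⟩ := this hy hx hx0 h.symm (by omega)
    exact ⟨hba.symm, hyx.symm⟩
  obtain ⟨c, rfl⟩ := Nat.exists_eq_add_of_le hab
  have hxy : x = p ^ c • y := by
    rw [pow_add, mul_smul] at h
    exact smul_right_injective _ (pow_ne_zero _ (by omega)) h
  rcases c with _ | c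
  · simpa using hxy
  · have hx0 : x ≠ 0 := hxy ▸ smul_ne_zero (pow_ne_zero _ (by omega)) hy0
    refine absurd (fun m => ?_) (hx hx0)
    rw [hxy, Finsupp.smul_apply, smul_eq_mul]
    exact Dvd.dvd.mul_right (dvd_pow_self p (Nat.succ_ne_zero c)) _

variable {n p r B : ℕ} {s : Fin (r + 1) → Finset (Fin (n + 1) →₀ ℕ)}

theorem pow_smul_apply_lt (hB : 0 < B) (hbox : ∀ i, ∀ e ∈ s i, ∀ m, p ^ (r - i) * e m < B)
    {i : Fin (r + 1)} {e : Fin (n + 1) →₀ ℕ} (he : e ∈ insert 0 (s i)) (m : Fin (n + 1)) :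
    (p ^ (r - i) • e) m < B := by
  rcases Finset.mem_insert.mp he with rfl | he
  · simpa using hB
  · exact hbox i e he m

theorem exists_lexKey_strict_max (hp : 1 < p) (hB : 0 < B)
    (hprim : ∀ i, ∀ e ∈ s i, e ≠ 0 → ¬ ∀ m, p ∣ e m)
    (hbox : ∀ i, ∀ e ∈ s i, ∀ m, p ^ (r - i) * e m < B) (hne : ∃ i, ∃ e ∈ s i, e ≠ 0) :
    ∃ i₀, ∃ e₀ ∈ s i₀, e₀ ≠ 0 ∧ ∀ i, ∀ e ∈ insert 0 (s i), (i ≠ i₀ ∨ e ≠ e₀) →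
      lexKey B (p ^ (r - i) • e) < lexKey B (p ^ (r - i₀) • e₀) := by
  obtain ⟨⟨i₀, e₀⟩, hmem₀, hmax⟩ :=
    (Finset.univ.sigma fun i => insert 0 (s i)).exists_max_image
      (fun x => lexKey B (p ^ (r - x.1) • x.2)) ⟨⟨0, 0⟩, by simp⟩
  simp only [Finset.mem_sigma, Finset.mem_univ, true_and, Sigma.forall] at hmem₀ hmax
  have hpow : ∀ a, p ^ a ≠ 0 := fun a => pow_ne_zero a (by omega)
  have hbox' := fun {i} {e} (he : e ∈ insert 0 (s i)) => pow_smul_apply_lt (p := p) hB hbox he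
  have he₀0 : e₀ ≠ 0 := by
    rintro rfl
    obtain ⟨i₁, e₁, he₁, he₁0⟩ := hne
    have hle := hmax i₁ e₁ (Finset.mem_insert_of_mem he₁)
    rw [smul_zero] at hle
    have h0 := eq_of_lexKey_eq (hbox' (Finset.mem_insert_of_mem he₁)) (by simpa using hB)
      (hle.antisymm (lexKey_zero_le B _))
    exact he₁0 ((smul_eq_zero.mp h0).resolve_left (hpow _))
  have hprim' : ∀ i, ∀ e ∈ insert 0 (s i), e ≠ 0 → ¬ ∀ m, p ∣ e m := fun i e he he0 =>
    hprim i e ((Finset.mem_insert.mp he).resolve_left he0) he0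
  refine ⟨i₀, e₀, (Finset.mem_insert.mp hmem₀).resolve_left he₀0, he₀0,
    fun i e he hne => (hmax i e he).lt_of_ne fun heq => ?_⟩
  obtain ⟨hexp, rfl⟩ := eq_of_pow_smul_eq hp (hprim' i e he) (hprim' i₀ e₀ hmem₀) he₀0
    (eq_of_lexKey_eq (hbox' he) (hbox' hmem₀) heq)
  exact hne.resolve_right (not_not.mpr rfl) (Fin.ext (by omega))

theorem exists_weight_strict_max (hp : 1 < p) (hB : 0 < B)
    (hprim : ∀ i, ∀ e ∈ s i, e ≠ 0 → ¬ ∀ m, p ∣ e m)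
    (hbox : ∀ i, ∀ e ∈ s i, ∀ m, p ^ (r - i) * e m < B) (hne : ∃ i, ∃ e ∈ s i, e ≠ 0) :
    ∃ i₀, ∃ e₀ ∈ s i₀, e₀ ≠ 0 ∧ ∀ {M : ℕ} {ρ : Fin n → ℕ}, B * (1 + ∑ j, ρ j) ≤ M →
      let w := weight (shiftWeight (shiftExponents M B ρ))
      (∀ e ∈ s i₀, e ≠ e₀ → w e < w e₀) ∧
        ∀ i ≠ i₀, (s i).sup w * p ^ (r - i) < w e₀ * p ^ (r - i₀) := by
  obtain ⟨i₀, e₀, he₀, he₀0, hlt⟩ := exists_lexKey_strict_max hp hB hprim hbox hne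
  refine ⟨i₀, e₀, he₀, he₀0, fun {M ρ} hM => ?_⟩
  intro w
  have hw : ∀ i, ∀ e ∈ insert 0 (s i), (i ≠ i₀ ∨ e ≠ e₀) →
      w e * p ^ (r - i) < w e₀ * p ^ (r - i₀) := fun i e he hne => by
    have := weight_lt_weight_of_lexKey_lt hM (pow_smul_apply_lt hB hbox he)
      (pow_smul_apply_lt hB hbox (Finset.mem_insert_of_mem he₀)) (hlt i e he hne)
    rwa [map_nsmul, map_nsmul, smul_eq_mul, smul_eq_mul, mul_comm, mul_comm (p ^ _)] at this
  refine ⟨fun e he hne => lt_of_mul_lt_mul_right (hw i₀ e (Finset.mem_insert_of_mem he)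
    (Or.inr hne)) (Nat.zero_le _), fun i hi => ?_⟩
  obtain ⟨e, he, hsup⟩ := (insert 0 (s i)).exists_mem_eq_sup (Finset.insert_nonempty _ _) w
  calc (s i).sup w * p ^ (r - i)
      ≤ (insert 0 (s i)).sup w * p ^ (r - i) :=
        Nat.mul_le_mul_right _ (Finset.sup_mono (Finset.subset_insert _ _))
    _ < _ := hsup ▸ hw i e he (Or.inl hi)

end Selection

theorem exists_bound_scaled_exponents {σ R : Type*} [CommSemiring R] {p r : ℕ} (hp : 0 < p)
    (f : Fin (r + 1) → MvPolynomial σ R) :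
    ∃ B, 2 ≤ B ∧ ∀ i, ∀ e ∈ (f i).support, ∀ m, p ^ (r - i) * e m < B := by
  refine ⟨p ^ r * Finset.univ.sup (fun i => (f i).totalDegree) + 2, by omega,
    fun i e he m => Nat.lt_add_right 1 (Nat.lt_succ_of_le (Nat.mul_le_mul ?_ ?_))⟩
  · exact Nat.pow_le_pow_right hp (Nat.sub_le _ _)
  · exact (monomial_le_degreeOf m he).trans ((degreeOf_le_totalDegree _ m).trans
      (Finset.le_sup (f := fun i => (f i).totalDegree) (Finset.mem_univ i)))

theorem exists_not_dvd_add_sum_mul {p n : ℕ} {e : Fin (n + 1) → ℕ} (h : ¬ ∀ m, p ∣ e m) :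
    ∃ ρ : Fin n → ℕ, ∑ j, ρ j ≤ 1 ∧ ¬ p ∣ e 0 + ∑ j, ρ j * e j.succ := by
  by_cases h0 : p ∣ e 0
  · obtain ⟨m, hm⟩ := not_forall.mp h
    induction m using Fin.cases with
    | zero => exact absurd h0 hm
    | succ j =>
      refine ⟨Pi.single j 1, by simp, ?_⟩
      simpa [Pi.single_apply, Nat.dvd_add_right h0] using hm
  · exact ⟨0, by simp, by simpa using h0⟩

theorem exists_shift_unique_max_degree_general
    (p : ℕ) (hp : p.Prime) (k : Type*) [Field k]
    (n r : ℕ) (f : Fin (r + 1) → MvPolynomial (Fin (n + 1)) k)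
    (hpp : ∀ i, ∀ d ∈ (f i).support, d ≠ 0 → ¬ (∀ j, p ∣ d j))
    (hnc : ∃ i, (f i).totalDegree ≠ 0) :
    ∃ d : Fin n → ℕ, (∀ i, 0 < d i) ∧ (∀ i j : Fin n, i < j → d j < d i) ∧
      ∃ i₀ : Fin (r + 1),
        (∀ i, i ≠ i₀ →
          (substShift k n d (f i)).totalDegree * p ^ (r - (i : ℕ)) <
            (substShift k n d (f i₀)).totalDegree * p ^ (r - (i₀ : ℕ))) ∧
        ¬ p ∣ (substShift k n d (f i₀)).totalDegree := by
  obtain ⟨B, hB, hbox⟩ := exists_bound_scaled_exponents hp.pos f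
  have hne : ∃ i, ∃ e ∈ (f i).support, e ≠ 0 := by
    obtain ⟨i, hi⟩ := hnc
    by_contra! h
    exact hi ((totalDegree_eq_zero_iff _ _).mpr fun e he m => by rw [h i e he]; rfl)
  obtain ⟨i₀, e₀, he₀, he₀0, hmax⟩ := exists_weight_strict_max hp.one_lt (by omega) hpp hbox hne
  obtain ⟨ρ, hρ, hndvd⟩ := exists_not_dvd_add_sum_mul (hpp i₀ e₀ he₀ he₀0)
  have hM : B * (1 + ∑ j, ρ j) ≤ 2 * p * B := by nlinarith [hp.two_le]
  obtain ⟨hmax₀, hlt⟩ := hmax hM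
  have hd : ∀ j, 0 < shiftExponents (2 * p * B) B ρ j :=
    shiftExponents_pos (by nlinarith [hp.two_le]) (by omega)
  have hdeg₀ := totalDegree_substShift_eq _ hd he₀ hmax₀
  refine ⟨_, hd, shiftExponents_strictAnti hB fun j => ?_, i₀, fun i hi => ?_, ?_⟩
  · have := Finset.single_le_sum (fun j _ => Nat.zero_le (ρ j)) (Finset.mem_univ j)
    nlinarith [hp.two_le]
  · rw [hdeg₀]
    exact (Nat.mul_le_mul_right _ (totalDegree_substShift_le _ hd _)).trans_lt (hlt i hi)
  · rwa [hdeg₀, weight_shiftExponents,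
      Nat.dvd_add_left (((dvd_mul_left p 2).mul_right B).mul_right _)]

/-- Let `k` be a field of characteristic `p > 0` and let `f 0, …, f r ∈ k[x_0, …, x_n]` be
polynomials none of which contains a nonconstant `p`-th power monomial, and not all constant.
Then there exist `d 1 > ⋯ > d n > 0` such that, setting
`f' i = f i (x_0, x_1 + x_0^{d 1}, …, x_n + x_0^{d n})`, the function
`i ↦ deg (f' i) * p ^ (r - i)` has a unique strict maximum at some `i₀`, and `p` does not divide
`deg (f' i₀)`. -/
theorem exists_shift_unique_max_degree
    (p : ℕ) (hp : p.Prime) (k : Type*) [Field k] [CharP k p]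
    (n r : ℕ) (f : Fin (r + 1) → MvPolynomial (Fin (n + 1)) k)
    (hpp : ∀ i, ∀ d ∈ (f i).support, d ≠ 0 → ¬ (∀ j, p ∣ d j))
    (hnc : ∃ i, (f i).totalDegree ≠ 0) :
    ∃ d : Fin n → ℕ, (∀ i, 0 < d i) ∧ (∀ i j : Fin n, i < j → d j < d i) ∧
      ∃ i₀ : Fin (r + 1),
        (∀ i, i ≠ i₀ →
          (substShift k n d (f i)).totalDegree * p ^ (r - (i : ℕ)) <
            (substShift k n d (f i₀)).totalDegree * p ^ (r - (i₀ : ℕ))) ∧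
        ¬ p ∣ (substShift k n d (f i₀)).totalDegree :=
  exists_shift_unique_max_degree_general p hp k n r f hpp hnc
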